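/- Let ϖ be uniform on {0,…,m−q} and let a_1,…,a_m be fixed reals with E(a) := (1/m)∑_{t=1}^m a_t. Then the bootstrap expectation of the (scaled) block average deviates from the full-sample average by edge effects: |(1/(q(m−q+1))) ∑_{t=0}^{m−q} ∑_{q'=1}^q a_{t+q'} − (1/m)∑_{t=1}^m a_t| ≤ (2q/m) · max_{1≤t≤m} |a_t|, for 1 ≤ q ≤ m/2. -/

import Mathlib

/-!
Swapping the two sums writes the block sum as `∑_{q'=1}^q ∑_{s=q'}^{q'+N-1} a_s` with
`N = m - q + 1`, so the bootstrap mean is the average over `q'` of the means of `a` over the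
windows `[q', q' + N - 1] ⊆ [1, m]`. A window mean differs from the full mean by at most
`2 (m - N) / m · max |a|`: the rescaling of the window sum costs `(1 - N/m) max |a|`, and the
`m - N` observations outside the window cost as much again. Finally `m - N = q - 1 < q`.
-/

open Finset

lemma abs_sum_le_card_mul {ι : Type*} {s : Finset ι} {f : ι → ℝ} {M : ℝ}
    (hf : ∀ i ∈ s, |f i| ≤ M) : |∑ i ∈ s, f i| ≤ #s * M :=
  (abs_sum_le_sum_abs f s).trans <| by simpa using sum_le_card_nsmul s _ M hf

lemma abs_sum_div_card_sub_sum_div_card_le {ι : Type*} [DecidableEq ι] {U W : Finset ι}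
    (hWU : W ⊆ U) (hW : W.Nonempty) {a : ι → ℝ} {M : ℝ} (hM : ∀ i ∈ U, |a i| ≤ M) :
    |(∑ i ∈ W, a i) / #W - (∑ i ∈ U, a i) / #U| ≤ 2 * (#U - #W) / #U * M := by
  have hn : (0 : ℝ) < #W := by exact_mod_cast hW.card_pos
  have hnk : (#W : ℝ) ≤ #U := by exact_mod_cast card_le_card hWU
  have hk : (0 : ℝ) < #U := hn.trans_le hnk
  have hsplit : (∑ i ∈ W, a i) / #W - (∑ i ∈ U, a i) / #U
      = (1 / #W - 1 / #U) * ∑ i ∈ W, a i - 1 / #U * ∑ i ∈ U \ W, a i := by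
    rw [← sum_sdiff hWU]; ring
  have hin : |∑ i ∈ W, a i| ≤ #W * M := abs_sum_le_card_mul fun i hi ↦ hM i (hWU hi)
  have hout : |∑ i ∈ U \ W, a i| ≤ (#U - #W) * M := by
    have := abs_sum_le_card_mul (s := U \ W) fun i hi ↦ hM i (sdiff_subset hi)
    rwa [card_sdiff_of_subset hWU, Nat.cast_sub (card_le_card hWU)] at this
  have hcoef : 0 ≤ 1 / (#W : ℝ) - 1 / #U := sub_nonneg.2 (one_div_le_one_div_of_le hn hnk)
  calc _ ≤ (1 / #W - 1 / #U) * |∑ i ∈ W, a i| + 1 / #U * |∑ i ∈ U \ W, a i| := by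
        rw [hsplit]
        refine (abs_sub _ _).trans_eq ?_
        rw [abs_mul, abs_mul, abs_of_nonneg hcoef, abs_of_pos (one_div_pos.2 hk)]
    _ ≤ (1 / #W - 1 / #U) * (#W * M) + 1 / #U * ((#U - #W) * M) := by gcongr
    _ = 2 * (#U - #W) / #U * M := by field_simp; ring

lemma sum_range_sum_Icc_add_eq_sum_Icc_sum_Ico (a : ℕ → ℝ) (N q : ℕ) :
    ∑ t ∈ range N, ∑ q' ∈ Icc 1 q, a (t + q') = ∑ q' ∈ Icc 1 q, ∑ s ∈ Ico q' (q' + N), a s := by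
  rw [sum_comm]
  refine sum_congr rfl fun q' _ ↦ ?_
  simp [sum_Ico_eq_sum_range, add_comm]

lemma abs_sum_Ico_div_sub_sum_Icc_div_le {a : ℕ → ℝ} {m N k : ℕ} (hN : 0 < N) (hk : 1 ≤ k)
    (hkN : k + N ≤ m + 1) {M : ℝ} (hM : ∀ s ∈ Icc 1 m, |a s| ≤ M) :
    |(∑ s ∈ Ico k (k + N), a s) / N - (∑ s ∈ Icc 1 m, a s) / m| ≤ 2 * (m - N) / m * M := by
  have hsub : Ico k (k + N) ⊆ Icc 1 m := fun s hs ↦ by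
    rw [mem_Ico] at hs; rw [mem_Icc]; omega
  simpa using abs_sum_div_card_sub_sum_div_card_le hsub (nonempty_Ico.2 (by omega)) hM

/-- Moving block bootstrap edge-effect bound: for `1 ≤ q` with `2q ≤ m`, the bootstrap
expectation of the block average deviates from the full-sample average by at most
`(2q/m) · max_{1 ≤ t ≤ m} |a_t|`. -/
theorem mbb_edge_effect_bound
    (m q : ℕ) (hq : 1 ≤ q) (hqm : 2 * q ≤ m) (a : ℕ → ℝ)
    (hne : (Finset.Icc 1 m).Nonempty) :
    |(1 / ((q : ℝ) * ((m : ℝ) - q + 1)))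
        * (∑ t ∈ Finset.range (m - q + 1), ∑ q' ∈ Finset.Icc 1 q, a (t + q'))
      - (1 / (m : ℝ)) * ∑ t ∈ Finset.Icc 1 m, a t|
      ≤ (2 * (q : ℝ) / m) * (Finset.Icc 1 m).sup' hne (fun t => |a t|) := by
  set N := m - q + 1 with hN
  set M := (Icc 1 m).sup' hne fun t ↦ |a t|
  have hNR : (N : ℝ) = m - q + 1 := by rw [hN, Nat.cast_add, Nat.cast_sub (by omega)]; simp
  have hM : ∀ s ∈ Icc 1 m, |a s| ≤ M := fun s hs ↦ le_sup' (fun t ↦ |a t|) hs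
  have hwindow : ∀ q' ∈ Icc 1 q,
      |(∑ s ∈ Ico q' (q' + N), a s) / N - (∑ s ∈ Icc 1 m, a s) / m| ≤ 2 * (q - 1) / m * M := by
    intro q' hq'
    rw [mem_Icc] at hq'
    convert abs_sum_Ico_div_sub_sum_Icc_div_le (N := N) (by omega) hq'.1 (by omega) hM using 3
    rw [hNR]; ring
  have hmean : (1 / ((q : ℝ) * (m - q + 1))) * ∑ q' ∈ Icc 1 q, ∑ s ∈ Ico q' (q' + N), a s
        - 1 / (m : ℝ) * ∑ s ∈ Icc 1 m, a s
      = 1 / q * ∑ q' ∈ Icc 1 q, ((∑ s ∈ Ico q' (q' + N), a s) / N - (∑ s ∈ Icc 1 m, a s) / m) := by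
    rw [sum_sub_distrib, ← sum_div, sum_const, Nat.card_Icc, add_tsub_cancel_right, nsmul_eq_mul,
      hNR]
    field_simp
  have hq0 : (0 : ℝ) < q := by exact_mod_cast hq
  rw [sum_range_sum_Icc_add_eq_sum_Icc_sum_Ico, hmean, abs_mul, abs_of_pos (one_div_pos.2 hq0)]
  calc 1 / (q : ℝ) * |∑ q' ∈ Icc 1 q, _| ≤ 1 / q * (#(Icc 1 q) * (2 * (q - 1) / m * M)) := by
        gcongr; exact abs_sum_le_card_mul hwindow
    _ = 2 * (q - 1) / m * M := by rw [Nat.card_Icc, add_tsub_cancel_right]; field_simp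
    _ ≤ 2 * q / m * M := by
        gcongr
        · exact (abs_nonneg _).trans (hM _ hne.choose_spec)
        · linarith
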